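/- arXiv:1007.1617 — 2 statements merged into one kernel-verified Lean document; each statement's English description precedes it below -/
import Mathlib

section
/- Let A > 0 and B ≥ 0, and let (x, y) solve x'(s) = x(s)y(s) + A, y'(s) = -x(s)^2 - B on ℝ. Then y(s) → -∞ as s → +∞ and y(s) → +∞ as s → -∞. -/
/-! Since `y' = -x² - B ≤ 0`, `y` is antitone; suppose it stays above some `b`, so that
`|y| ≤ C` on `[0, ∞)`. In the strip `|x| ≤ ε = A / (2C)` we have `x' ≥ A / 2`, so `x` crosses
every level `c ∈ [-ε, ε]` only upwards. If `|x| ≥ ε` for all large `s`, then `y' ≤ -ε²` and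
`y → -∞`. Otherwise `x` enters the strip, must then climb to `ε / 2`, and stays above it; now
`y' ≤ -ε² / 4`, again forcing `y → -∞`. The limit at `-∞` follows by applying this to the
solution `t ↦ (-x (-t), -y (-t))`. -/

open Filter Set

lemma HasDerivAt.neg_comp_neg {f : ℝ → ℝ} {f' s : ℝ} (hf : HasDerivAt f f' (-s)) :
    HasDerivAt (fun t ↦ -f (-t)) f' s := by
  have h := (hf.comp s (hasDerivAt_neg' s)).neg
  rwa [mul_neg_one, neg_neg] at h

lemma tendsto_atTop_of_le_hasDerivAt {f f' : ℝ → ℝ} (hf : ∀ s, HasDerivAt f (f' s) s)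
    {a k : ℝ} (hk : 0 < k) (hd : ∀ s ≥ a, k ≤ f' s) : Tendsto f atTop atTop := by
  have hgrowth : ∀ s ≥ a, f a + k * (s - a) ≤ f s := by
    intro s hs
    have := (convex_Ici a).mul_sub_le_image_sub_of_le_deriv
      (fun t _ ↦ (hf t).continuousAt.continuousWithinAt)
      (fun t _ ↦ (hf t).differentiableAt.differentiableWithinAt)
      (fun t ht ↦ by rw [(hf t).deriv]; exact hd t (interior_subset ht)) a self_mem_Ici s hs hs
    linarith
  refine tendsto_atTop_mono' atTop ((eventually_ge_atTop a).mono hgrowth) ?_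
  exact tendsto_atTop_add_const_left _ _
    ((tendsto_id.atTop_add tendsto_const_nhds).const_mul_atTop hk)

lemma tendsto_atBot_of_hasDerivAt_le {f f' : ℝ → ℝ} (hf : ∀ s, HasDerivAt f (f' s) s)
    {a k : ℝ} (hk : 0 < k) (hd : ∀ s ≥ a, f' s ≤ -k) : Tendsto f atTop atBot :=
  tendsto_neg_atTop_iff.1 <| tendsto_atTop_of_le_hasDerivAt (fun s ↦ (hf s).neg) hk
    fun s hs ↦ le_neg.2 (hd s hs)

lemma le_of_hasDerivAt_pos_of_eq {f f' : ℝ → ℝ} (hf : ∀ s, HasDerivAt f (f' s) s)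
    {a c : ℝ} (ha : c ≤ f a) (hd : ∀ s ≥ a, f s = c → 0 < f' s) : ∀ s ≥ a, c ≤ f s := by
  intro s hs
  have := image_le_of_deriv_right_lt_deriv_boundary (f := fun t ↦ -f t) (f' := fun t ↦ -f' t)
    (fun t _ ↦ (hf t).continuousAt.neg.continuousWithinAt)
    (fun t _ ↦ (hf t).neg.hasDerivWithinAt) (B := fun _ ↦ -c) (B' := fun _ ↦ 0)
    (neg_le_neg ha) (fun _ ↦ hasDerivAt_const _ _)
    (fun t ht heq ↦ neg_neg_of_pos (hd t ht.1 (neg_inj.1 heq))) ⟨hs, le_rfl⟩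
  exact neg_le_neg_iff.1 this

variable {A B : ℝ} {x y : ℝ → ℝ}

lemma tendsto_atBot_of_le_abs (hB : 0 ≤ B) (hy : ∀ s, HasDerivAt y (-(x s) ^ 2 - B) s)
    {a δ : ℝ} (hδ : 0 < δ) (hxδ : ∀ s ≥ a, δ ≤ |x s|) : Tendsto y atTop atBot := by
  refine tendsto_atBot_of_hasDerivAt_le hy (a := a) (pow_pos hδ 2) fun s hs ↦ ?_
  have : δ ^ 2 ≤ x s ^ 2 := by simpa only [sq_abs] using pow_le_pow_left₀ hδ.le (hxδ s hs) 2
  linarith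

lemma eventually_half_le_of_neg_le (hA : 0 < A) (hx : ∀ s, HasDerivAt x (x s * y s + A) s)
    {C ε : ℝ} (hC : ∀ s ≥ 0, |y s| ≤ C) (hε : 0 < ε) (hεC : ε * C ≤ A / 2)
    {s₀ : ℝ} (hs₀ : 0 ≤ s₀) (hx₀ : -ε ≤ x s₀) : ∀ᶠ s in atTop, ε / 2 ≤ x s := by
  have hstrip : ∀ s ≥ 0, |x s| ≤ ε → A / 2 ≤ x s * y s + A := by
    intro s hs hxs
    have : |x s * y s| ≤ ε * C := by
      rw [abs_mul]; exact mul_le_mul hxs (hC s hs) (abs_nonneg _) hε.le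
    linarith [neg_abs_le (x s * y s)]
  have hbarrier : ∀ c, |c| ≤ ε → ∀ a ≥ 0, c ≤ x a → ∀ s ≥ a, c ≤ x s := by
    intro c hc a ha hxa
    refine le_of_hasDerivAt_pos_of_eq hx hxa fun s hs hxs ↦ ?_
    have := hstrip s (ha.trans hs) (hxs ▸ hc)
    linarith
  have habove := hbarrier (-ε) (by rw [abs_neg, abs_of_pos hε]) s₀ hs₀ hx₀
  obtain ⟨s₂, hs₂, hx₂⟩ : ∃ s₂ ≥ s₀, ε / 2 ≤ x s₂ := by
    by_contra! hbelow
    have hx_top : Tendsto x atTop atTop := tendsto_atTop_of_le_hasDerivAt hx (half_pos hA)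
      fun s hs ↦ hstrip s (hs₀.trans hs) (abs_le.2 ⟨habove s hs, by linarith [hbelow s hs]⟩)
    obtain ⟨s, hxs, hs⟩ :=
      ((hx_top.eventually_ge_atTop (ε / 2)).and (eventually_ge_atTop s₀)).exists
    linarith [hbelow s hs]
  have hε₂ : |ε / 2| ≤ ε := by rw [abs_of_pos (half_pos hε)]; linarith
  exact eventually_atTop.2 ⟨s₂, hbarrier (ε / 2) hε₂ s₂ (hs₀.trans hs₂) hx₂⟩

lemma tendsto_atTop_atBot_of_hasDerivAt_system (hA : 0 < A) (hB : 0 ≤ B)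
    (hx : ∀ s, HasDerivAt x (x s * y s + A) s) (hy : ∀ s, HasDerivAt y (-(x s) ^ 2 - B) s) :
    Tendsto y atTop atBot := by
  by_contra hbot
  have hanti : Antitone y := antitone_of_hasDerivAt_nonpos hy fun s ↦ by
    simp only [Pi.zero_apply]; nlinarith [sq_nonneg (x s)]
  obtain ⟨b, hb⟩ : ∃ b, ∀ s, b < y s := by
    simpa [tendsto_atTop_atBot_iff_of_antitone hanti] using hbot
  set C := |b| + |y 0| + 1
  have hC : 0 < C := by positivity
  have hyC : ∀ s ≥ 0, |y s| ≤ C := fun s hs ↦ abs_le.2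
    ⟨by linarith [hb s, neg_abs_le b, abs_nonneg (y 0)],
      by linarith [hanti hs, le_abs_self (y 0), abs_nonneg b]⟩
  set ε := A / (2 * C)
  have hε : 0 < ε := by positivity
  have hεC : ε * C = A / 2 := by simp only [ε]; field_simp
  obtain ⟨s₀, hs₀, hx₀⟩ : ∃ s₀ ≥ 0, |x s₀| < ε := by
    by_contra! hlarge
    exact hbot (tendsto_atBot_of_le_abs hB hy hε hlarge)
  obtain ⟨s₂, hs₂⟩ := eventually_atTop.1 <|
    eventually_half_le_of_neg_le hA hx hyC hε hεC.le hs₀ (neg_le_of_abs_le hx₀.le)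
  exact hbot (tendsto_atBot_of_le_abs hB hy (half_pos hε) fun s hs ↦
    (hs₂ s hs).trans (le_abs_self _))

/-- If `A > 0`, `B ≥ 0` and `(x, y)` solves `x' = xy + A`, `y' = -x² - B`
on `ℝ`, then `y → -∞` as `s → +∞` and `y → +∞` as `s → -∞`. -/
theorem stmt_6 (A B : ℝ) (hA : 0 < A) (hB : 0 ≤ B) (x y : ℝ → ℝ)
    (hx : ∀ s, HasDerivAt x (x s * y s + A) s)
    (hy : ∀ s, HasDerivAt y (-(x s) ^ 2 - B) s) :
    Tendsto y atTop atBot ∧ Tendsto y atBot atTop := by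
  refine ⟨tendsto_atTop_atBot_of_hasDerivAt_system hA hB hx hy, ?_⟩
  have hrev := tendsto_atTop_atBot_of_hasDerivAt_system hA hB (x := fun t ↦ -x (-t))
    (y := fun t ↦ -y (-t)) (fun s ↦ by simpa using (hx (-s)).neg_comp_neg)
    (fun s ↦ by simpa using (hy (-s)).neg_comp_neg)
  exact tendsto_comp_neg_atTop_iff.1 (tendsto_neg_atBot_iff.1 hrev)
end

section
/- Let (x, y) solve x'(s) = x(s)y(s), y'(s) = -x(s)^2 + 1 on ℝ (the system with A = 0, B = -1), with x(0) > 0 and (x(0), y(0)) ≠ (1, 0). Then the solution is periodic: there exists L > 0 such that x(s + L) = x(s) and y(s + L) = y(s) for all s ∈ ℝ. -/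
/-!
A zero of `x` would lie on the solution `s ↦ (0, y₀ + s)`, so by uniqueness `x` keeps the sign
of `x 0`. Then `y` has zeros arbitrarily far in the future: if, say, `y > 0` on a ray, `x`
increases there; once `x(t₀) > 1` we get `y' ≤ 1 - x(t₀)² < 0` and `y` turns negative, while
if `x ≤ 1` throughout, `y` increases and `(log x)' = y` pushes `x` above `1`. Finally
`s ↦ (x (2σ - s), -y (2σ - s))` solves the same system, so by uniqueness the orbit is
symmetric about every zero `σ` of `y`, and composing the reflections in two zeros
`σ₁ < σ₂` is the translation by `2 (σ₂ - σ₁)`.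
-/

open Set Filter Topology

theorem ODE_solution_unique_univ_of_locallyLipschitz {E : Type*} [NormedAddCommGroup E]
    [NormedSpace ℝ E] {v : E → E} (hv : LocallyLipschitz v) {f g : ℝ → E} {t₀ : ℝ}
    (hf : ∀ t, HasDerivAt f (v (f t)) t) (hg : ∀ t, HasDerivAt g (v (g t)) t)
    (heq : f t₀ = g t₀) : f = g := by
  ext t
  obtain ⟨a, b, hta, ht₀⟩ : ∃ a b, t ∈ Ioo a b ∧ t₀ ∈ Ioo a b :=
    ⟨min t t₀ - 1, max t t₀ + 1, by constructor <;> constructor <;> grind⟩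
  set K := f '' Icc a b ∪ g '' Icc a b
  have hK : IsCompact K :=
    (isCompact_Icc.image_of_continuousOn (HasDerivAt.continuousOn fun t _ => hf t)).union
      (isCompact_Icc.image_of_continuousOn (HasDerivAt.continuousOn fun t _ => hg t))
  obtain ⟨L, hL⟩ := hv.locallyLipschitzOn.exists_lipschitzOnWith_of_compact hK
  exact ODE_solution_unique_of_mem_Ioo (s := fun _ => K) (fun _ _ => hL) ht₀
    (fun s hs => ⟨hf s, Or.inl (mem_image_of_mem f (Ioo_subset_Icc_self hs))⟩)
    (fun s hs => ⟨hg s, Or.inr (mem_image_of_mem g (Ioo_subset_Icc_self hs))⟩) heq hta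

theorem monotoneOn_Ici_of_hasDerivAt_nonneg {f f' : ℝ → ℝ} {T : ℝ}
    (hf : ∀ t ≥ T, HasDerivAt f (f' t) t) (hf' : ∀ t ≥ T, 0 ≤ f' t) :
    MonotoneOn f (Ici T) :=
  monotoneOn_of_hasDerivWithinAt_nonneg (convex_Ici T)
    (HasDerivAt.continuousOn fun t ht => hf t ht)
    (fun t ht => (hf t (interior_subset ht)).hasDerivWithinAt)
    (fun t ht => hf' t (interior_subset ht))

theorem antitoneOn_Ici_of_hasDerivAt_nonpos {f f' : ℝ → ℝ} {T : ℝ}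
    (hf : ∀ t ≥ T, HasDerivAt f (f' t) t) (hf' : ∀ t ≥ T, f' t ≤ 0) :
    AntitoneOn f (Ici T) :=
  antitoneOn_of_hasDerivWithinAt_nonpos (convex_Ici T)
    (HasDerivAt.continuousOn fun t ht => hf t ht)
    (fun t ht => (hf t (interior_subset ht)).hasDerivWithinAt)
    (fun t ht => hf' t (interior_subset ht))

theorem HasDerivAt.log_of_mul {f g : ℝ → ℝ} {t : ℝ} (hf : HasDerivAt f (f t * g t) t)
    (ht : f t ≠ 0) : HasDerivAt (fun s => Real.log (f s)) (g t) t :=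
  (hf.log ht).congr_deriv (by field_simp)

theorem tendsto_atTop_of_hasDerivAt_ge {f f' : ℝ → ℝ} {T c : ℝ} (hc : 0 < c)
    (hf : ∀ t ≥ T, HasDerivAt f (f' t) t) (hf' : ∀ t ≥ T, c ≤ f' t) :
    Tendsto f atTop atTop := by
  have hmono : MonotoneOn (fun t => f t - t * c) (Ici T) :=
    monotoneOn_Ici_of_hasDerivAt_nonneg (fun t ht => (hf t ht).sub (hasDerivAt_mul_const c))
      fun t ht => sub_nonneg.2 (hf' t ht)
  have hlin : Tendsto (fun t => f T - c * T + c * t) atTop atTop :=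
    tendsto_atTop_add_const_left _ _ (tendsto_id.const_mul_atTop hc)
  refine tendsto_atTop_mono' _ ?_ hlin
  filter_upwards [eventually_ge_atTop T] with t ht
  linarith [hmono self_mem_Ici ht ht]

theorem tendsto_atBot_of_hasDerivAt_le_s17 {f f' : ℝ → ℝ} {T c : ℝ} (hc : 0 < c)
    (hf : ∀ t ≥ T, HasDerivAt f (f' t) t) (hf' : ∀ t ≥ T, f' t ≤ -c) :
    Tendsto f atTop atBot :=
  tendsto_neg_atTop_iff.mp <| tendsto_atTop_of_hasDerivAt_ge hc (fun t ht => (hf t ht).neg)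
    fun t ht => le_neg.mpr (hf' t ht)

namespace Shrinker

def field (p : ℝ × ℝ) : ℝ × ℝ := (p.1 * p.2, -p.1 ^ 2 + 1)

lemma locallyLipschitz_field : LocallyLipschitz field :=
  ContDiff.locallyLipschitz (𝕂 := ℝ) (by unfold field; fun_prop)

variable {x y : ℝ → ℝ} (hx : ∀ s, HasDerivAt x (x s * y s) s)
  (hy : ∀ s, HasDerivAt y (-(x s) ^ 2 + 1) s)
include hx hy

lemma hasDerivAt_prodMk (t : ℝ) : HasDerivAt (fun s => (x s, y s)) (field (x t, y t)) t :=
  (hx t).prodMk (hy t)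

lemma eq_of_hasDerivAt_field {F : ℝ → ℝ × ℝ} (hF : ∀ t, HasDerivAt F (field (F t)) t)
    {t₀ : ℝ} (heq : (x t₀, y t₀) = F t₀) (s : ℝ) : (x s, y s) = F s :=
  congrFun (ODE_solution_unique_univ_of_locallyLipschitz locallyLipschitz_field
    (hasDerivAt_prodMk hx hy) hF heq) s

lemma x_ne_zero (h0 : x 0 ≠ 0) (s : ℝ) : x s ≠ 0 := by
  intro hs
  have hF : ∀ t, HasDerivAt (fun t => ((0 : ℝ), y s + (t - s))) (field (0, y s + (t - s))) t :=
    fun t => by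
      simpa [field] using
        (hasDerivAt_const t (0 : ℝ)).prodMk (((hasDerivAt_id t).sub_const s).const_add (y s))
  have := eq_of_hasDerivAt_field hx hy hF (t₀ := s) (by simp [hs]) 0
  exact h0 (Prod.ext_iff.mp this).1

lemma x_pos (h0 : 0 < x 0) (s : ℝ) : 0 < x s := by
  by_contra! hs
  obtain ⟨t, ht⟩ := intermediate_value_univ s 0
    (Differentiable.continuous fun t => (hx t).differentiableAt) ⟨hs, h0.le⟩
  exact x_ne_zero hx hy h0.ne' t ht

lemma reflect_of_y_eq_zero {σ : ℝ} (hσ : y σ = 0) (s : ℝ) :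
    x (2 * σ - s) = x s ∧ y (2 * σ - s) = -y s := by
  have hF : ∀ t, HasDerivAt (fun t => (x (2 * σ - t), -y (2 * σ - t)))
      (field (x (2 * σ - t), -y (2 * σ - t))) t := fun t => by
    have hr : HasDerivAt (fun t => 2 * σ - t) (-1) t := by
      simpa using (hasDerivAt_id t).const_sub (2 * σ)
    refine (((hx _).comp t hr).prodMk ((hy _).comp t hr).neg).congr_deriv ?_
    simp only [field, Prod.mk.injEq]
    constructor <;> ring
  have := eq_of_hasDerivAt_field hx hy hF (t₀ := σ) (by simp [two_mul, hσ]) s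
  simp only [Prod.mk.injEq] at this
  exact ⟨this.1.symm, by linarith⟩

lemma periodic_of_y_eq_zero {σ₁ σ₂ : ℝ} (h₁ : y σ₁ = 0) (h₂ : y σ₂ = 0) :
    Function.Periodic x (2 * (σ₂ - σ₁)) ∧ Function.Periodic y (2 * (σ₂ - σ₁)) := by
  have hshift (s : ℝ) : 2 * σ₂ - (s + 2 * (σ₂ - σ₁)) = 2 * σ₁ - s := by ring
  refine ⟨fun s => ?_, fun s => ?_⟩
  · rw [← (reflect_of_y_eq_zero hx hy h₂ _).1, hshift, (reflect_of_y_eq_zero hx hy h₁ s).1]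
  · rw [← neg_neg (y (s + _)), ← (reflect_of_y_eq_zero hx hy h₂ _).2, hshift,
      (reflect_of_y_eq_zero hx hy h₁ s).2, neg_neg]

section Oscillation

variable (hpos : ∀ s, 0 < x s)
include hpos

lemma exists_ge_y_nonpos (T : ℝ) : ∃ s ≥ T, y s ≤ 0 := by
  by_contra! hy_pos
  have hx_mono : MonotoneOn x (Ici T) :=
    monotoneOn_Ici_of_hasDerivAt_nonneg (fun t _ => hx t)
      fun t ht => (mul_pos (hpos t) (hy_pos t ht)).le
  by_cases hbig : ∃ t₀ ≥ T, 1 < x t₀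
  · obtain ⟨t₀, ht₀, hx₀⟩ := hbig
    have hlim : Tendsto y atTop atBot :=
      tendsto_atBot_of_hasDerivAt_le_s17 (c := x t₀ ^ 2 - 1) (by nlinarith) (fun t _ => hy t)
        fun t ht => by nlinarith [hx_mono ht₀ (ht₀.trans ht) ht]
    obtain ⟨s, hsT, hs⟩ := ((eventually_ge_atTop T).and (hlim.eventually_lt_atBot 0)).exists
    exact (hy_pos s hsT).not_gt hs
  · push Not at hbig
    have hy_mono : MonotoneOn y (Ici T) :=
      monotoneOn_Ici_of_hasDerivAt_nonneg (fun t _ => hy t)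
        fun t ht => by nlinarith [hbig t ht, hpos t]
    have hlim : Tendsto (fun s => Real.log (x s)) atTop atTop :=
      tendsto_atTop_of_hasDerivAt_ge (hy_pos T le_rfl)
        (fun t _ => (hx t).log_of_mul (hpos t).ne')
        fun t ht => hy_mono self_mem_Ici ht ht
    obtain ⟨s, hsT, hs⟩ := ((eventually_ge_atTop T).and (hlim.eventually_gt_atTop 0)).exists
    exact (Real.log_nonpos (hpos s).le (hbig s hsT)).not_gt hs

lemma exists_ge_y_nonneg (T : ℝ) : ∃ s ≥ T, 0 ≤ y s := by
  by_contra! hy_neg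
  have hx_anti : AntitoneOn x (Ici T) :=
    antitoneOn_Ici_of_hasDerivAt_nonpos (fun t _ => hx t)
      fun t ht => (mul_neg_of_pos_of_neg (hpos t) (hy_neg t ht)).le
  by_cases hsmall : ∃ t₀ ≥ T, x t₀ < 1
  · obtain ⟨t₀, ht₀, hx₀⟩ := hsmall
    have hlim : Tendsto y atTop atTop :=
      tendsto_atTop_of_hasDerivAt_ge (c := 1 - x t₀ ^ 2) (by nlinarith [hpos t₀])
        (fun t _ => hy t)
        fun t ht => by nlinarith [hx_anti ht₀ (ht₀.trans ht) ht, hpos t]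
    obtain ⟨s, hsT, hs⟩ := ((eventually_ge_atTop T).and (hlim.eventually_gt_atTop 0)).exists
    exact (hy_neg s hsT).not_gt hs
  · push Not at hsmall
    have hy_anti : AntitoneOn y (Ici T) :=
      antitoneOn_Ici_of_hasDerivAt_nonpos (fun t _ => hy t)
        fun t ht => by nlinarith [hsmall t ht]
    have hlim : Tendsto (fun s => Real.log (x s)) atTop atBot :=
      tendsto_atBot_of_hasDerivAt_le_s17 (neg_pos.2 (hy_neg T le_rfl))
        (fun t _ => (hx t).log_of_mul (hpos t).ne')
        fun t ht => by linarith [hy_anti self_mem_Ici ht ht]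
    obtain ⟨s, hsT, hs⟩ := ((eventually_ge_atTop T).and (hlim.eventually_lt_atBot 0)).exists
    exact (Real.log_nonneg (hsmall s hsT)).not_gt hs

lemma exists_ge_y_eq_zero (T : ℝ) : ∃ s ≥ T, y s = 0 := by
  obtain ⟨a, haT, ha⟩ := exists_ge_y_nonpos hx hy hpos T
  obtain ⟨b, hbT, hb⟩ := exists_ge_y_nonneg hx hy hpos T
  exact isPreconnected_Ici.intermediate_value haT hbT
    (Differentiable.continuous fun t => (hy t).differentiableAt).continuousOn ⟨ha, hb⟩

end Oscillation

end Shrinker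

theorem stmt_17_general (x y : ℝ → ℝ)
    (hx : ∀ s, HasDerivAt x (x s * y s) s)
    (hy : ∀ s, HasDerivAt y (-(x s) ^ 2 + 1) s)
    (h0 : 0 < x 0) :
    ∃ L : ℝ, 0 < L ∧ ∀ s, x (s + L) = x s ∧ y (s + L) = y s := by
  have hpos := Shrinker.x_pos hx hy h0
  obtain ⟨σ₁, -, h₁⟩ := Shrinker.exists_ge_y_eq_zero hx hy hpos 0
  obtain ⟨σ₂, hσ₂, h₂⟩ := Shrinker.exists_ge_y_eq_zero hx hy hpos (σ₁ + 1)
  obtain ⟨hx_per, hy_per⟩ := Shrinker.periodic_of_y_eq_zero hx hy h₁ h₂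
  exact ⟨2 * (σ₂ - σ₁), by linarith, fun s => ⟨hx_per s, hy_per s⟩⟩

/-- If `(x, y)` solves `x' = xy`, `y' = -x² + 1` on `ℝ` (the system with
`A = 0`, `B = -1`) with `x(0) > 0` and `(x(0), y(0)) ≠ (1, 0)`, then the solution is
periodic. -/
theorem stmt_17 (x y : ℝ → ℝ)
    (hx : ∀ s, HasDerivAt x (x s * y s) s)
    (hy : ∀ s, HasDerivAt y (-(x s) ^ 2 + 1) s)
    (h0 : 0 < x 0) (hne : (x 0, y 0) ≠ (1, 0)) :
    ∃ L : ℝ, 0 < L ∧ ∀ s, x (s + L) = x s ∧ y (s + L) = y s :=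
  stmt_17_general x y hx hy h0
end
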